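/- arXiv:1305.2232 — 2 statements merged into one kernel-verified Lean document; each statement's English description precedes it below -/
import Mathlib

section
/- Let (Ω, μ) be a measure space, n a positive natural number, φ_1, …, φ_n and μ_1, …, μ_n functions in L²(Ω) satisfying ∫_Ω μ_i φ_j dμ = c_j δ_{ij} for all i, j, and let h_1, …, h_n be positive reals and C, C₂, C₃ positive constants such that: c_i ≥ C·h_i² for all i; ‖Σ_k a_k φ_k‖²_{L²(Ω)} ≤ C₂·Σ_k a_k² h_k² for all real coefficients a; and ‖Σ_k a_k μ_k‖²_{L²(Ω)} ≤ C₃·Σ_k a_k² h_k² for all real coefficients a. Then the inf-sup condition holds with β = √(C₂·C₃)/C: for every nonzero coefficient vector (a_1, …, a_n), writing φ_h = Σ_k a_k φ_k and μ_h = Σ_k a_k μ_k, one has μ_h ≠ 0 in L²(Ω) and ‖φ_h‖_{L²(Ω)} ≤ β · (∫_Ω μ_h φ_h dμ) / ‖μ_h‖_{L²(Ω)}. -/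
/-!
Biorthogonality diagonalises the pairing: `∫ μ_h φ_h = ∑ aₖ² cₖ ≥ C S` with `S = ∑ aₖ² hₖ²`,
while the two norm bounds give `‖φ_h‖ ‖μ_h‖ ≤ √(C₂ C₃) S`. Dividing one by the other is the
inf-sup estimate, and positivity of the pairing forces `μ_h ≠ 0`.
-/

open MeasureTheory Finset

section

variable {Ω : Type*} [MeasurableSpace Ω] {ν : Measure Ω} {ι : Type*} [Fintype ι]

theorem integral_sum_mul_sum {f g : ι → Ω → ℝ}
    (hfg : ∀ i j, Integrable (fun x => f i x * g j x) ν) (a b : ι → ℝ) :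
    ∫ x, (∑ i, a i * f i x) * (∑ j, b j * g j x) ∂ν =
      ∑ i, ∑ j, a i * b j * ∫ x, f i x * g j x ∂ν := by
  have hexpand : ∀ x, (∑ i, a i * f i x) * (∑ j, b j * g j x) =
      ∑ i, ∑ j, a i * b j * (f i x * g j x) := fun x => by
    rw [sum_mul_sum]
    exact sum_congr rfl fun i _ => sum_congr rfl fun j _ => by ring
  simp_rw [hexpand]
  rw [integral_finsetSum _ fun i _ => integrable_finsetSum _ fun j _ => (hfg i j).const_mul _]
  refine sum_congr rfl fun i _ => ?_
  rw [integral_finsetSum _ fun j _ => (hfg i j).const_mul _]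
  simp_rw [integral_const_mul]

theorem integral_sum_mul_sum_of_biorthogonal [DecidableEq ι] {μ φ : ι → Ω → ℝ} {c : ι → ℝ}
    (hμ : ∀ i, MemLp (μ i) 2 ν) (hφ : ∀ i, MemLp (φ i) 2 ν)
    (hbi : ∀ i j, ∫ x, μ i x * φ j x ∂ν = if i = j then c j else 0) (a : ι → ℝ) :
    ∫ x, (∑ k, a k * μ k x) * (∑ k, a k * φ k x) ∂ν = ∑ k, a k ^ 2 * c k := by
  rw [integral_sum_mul_sum (fun i j => (hμ i).integrable_mul (hφ j)) a a]
  simp_rw [hbi, mul_ite, mul_zero, sum_ite_eq, mem_univ, if_true, sq]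

theorem eLpNorm_ne_zero_of_integral_mul_ne_zero {p : ENNReal} (hp : p ≠ 0) {f g : Ω → ℝ}
    (hf : AEStronglyMeasurable f ν) (hfg : ∫ x, f x * g x ∂ν ≠ 0) : eLpNorm f p ν ≠ 0 := by
  intro hzero
  refine hfg (integral_eq_zero_of_ae ?_)
  filter_upwards [(eLpNorm_eq_zero_iff hf hp).mp hzero] with x hx
  simp [hx]

end

theorem sum_sq_mul_sq_pos {ι : Type*} [Fintype ι] {a h : ι → ℝ} (ha : a ≠ 0)
    (hh : ∀ i, h i ≠ 0) : 0 < ∑ i, a i ^ 2 * h i ^ 2 := by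
  obtain ⟨i, hi⟩ := Function.ne_iff.mp ha
  exact sum_pos' (fun k _ => by positivity)
    ⟨i, mem_univ i, mul_pos (sq_pos_of_ne_zero hi) (sq_pos_of_ne_zero (hh i))⟩

theorem mul_le_sqrt_mul_mul_of_sq_le {x y C₂ C₃ S : ℝ} (hS : 0 ≤ S)
    (hxS : x ^ 2 ≤ C₂ * S) (hyS : y ^ 2 ≤ C₃ * S) : x * y ≤ √(C₂ * C₃) * S := by
  rw [← Real.sqrt_sq hS, ← Real.sqrt_mul' _ (sq_nonneg S)]
  refine Real.le_sqrt_of_sq_le ?_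
  calc (x * y) ^ 2 = x ^ 2 * y ^ 2 := mul_pow x y 2
    _ ≤ (C₂ * S) * (C₃ * S) := mul_le_mul hxS hyS (sq_nonneg y) ((sq_nonneg x).trans hxS)
    _ = C₂ * C₃ * S ^ 2 := by ring

theorem infsup_from_biorthogonality_general
    {Ω : Type*} [MeasurableSpace Ω] (ν : Measure Ω)
    (n : ℕ)
    (φ μ : Fin n → Ω → ℝ) (c : Fin n → ℝ) (h : Fin n → ℝ)
    (C C₂ C₃ : ℝ) (hC : 0 < C)
    (hh : ∀ i, 0 < h i)
    (hφ : ∀ i, MemLp (φ i) 2 ν) (hμ : ∀ i, MemLp (μ i) 2 ν)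
    (hbi : ∀ i j : Fin n,
      ∫ x, μ i x * φ j x ∂ν = if i = j then c j else 0)
    (hc : ∀ i, C * h i ^ 2 ≤ c i)
    (hφnorm : ∀ a : Fin n → ℝ,
      ((eLpNorm (fun x => ∑ k, a k * φ k x) 2 ν).toReal) ^ 2 ≤
        C₂ * ∑ k, (a k) ^ 2 * (h k) ^ 2)
    (hμnorm : ∀ a : Fin n → ℝ,
      ((eLpNorm (fun x => ∑ k, a k * μ k x) 2 ν).toReal) ^ 2 ≤
        C₃ * ∑ k, (a k) ^ 2 * (h k) ^ 2) :
    ∀ a : Fin n → ℝ, a ≠ 0 →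
      eLpNorm (fun x => ∑ k, a k * μ k x) 2 ν ≠ 0 ∧
      (eLpNorm (fun x => ∑ k, a k * φ k x) 2 ν).toReal ≤
        (Real.sqrt (C₂ * C₃) / C) *
          (∫ x, (∑ k, a k * μ k x) * (∑ k, a k * φ k x) ∂ν) /
            (eLpNorm (fun x => ∑ k, a k * μ k x) 2 ν).toReal := by
  intro a ha
  set S := ∑ k, a k ^ 2 * h k ^ 2
  have hS : 0 < S := sum_sq_mul_sq_pos ha fun i => (hh i).ne'
  have hpairing : C * S ≤ ∫ x, (∑ k, a k * μ k x) * (∑ k, a k * φ k x) ∂ν := by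
    rw [integral_sum_mul_sum_of_biorthogonal hμ hφ hbi, mul_sum]
    refine sum_le_sum fun k _ => ?_
    rw [mul_left_comm]
    exact mul_le_mul_of_nonneg_left (hc k) (sq_nonneg _)
  have hμh : MemLp (fun x => ∑ k, a k * μ k x) 2 ν :=
    memLp_finsetSum _ fun k _ => (hμ k).const_mul (a k)
  have hne := eLpNorm_ne_zero_of_integral_mul_ne_zero two_ne_zero hμh.1
    ((mul_pos hC hS).trans_le hpairing).ne'
  refine ⟨hne, ?_⟩
  rw [le_div_iff₀ (ENNReal.toReal_pos hne hμh.eLpNorm_ne_top), div_mul_eq_mul_div,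
    le_div_iff₀ hC]
  calc _ ≤ √(C₂ * C₃) * S * C :=
        mul_le_mul_of_nonneg_right (mul_le_sqrt_mul_mul_of_sq_le hS.le (hφnorm a) (hμnorm a)) hC.le
    _ = √(C₂ * C₃) * (C * S) := by ring
    _ ≤ _ := by gcongr

/-- Under biorthogonality `∫ μᵢ φⱼ = cⱼ δᵢⱼ`, with `cᵢ ≥ C hᵢ²` and two-sided
`L²`-norm equivalences `‖Σ aₖ φₖ‖² ≤ C₂ Σ aₖ² hₖ²`, `‖Σ aₖ μₖ‖² ≤ C₃ Σ aₖ² hₖ²`,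
the inf-sup condition holds with `β = √(C₂ C₃)/C`: for every nonzero coefficient
vector `a`, with `φ_h = Σ aₖ φₖ` and `μ_h = Σ aₖ μₖ`, one has `μ_h ≠ 0` in `L²`
and `‖φ_h‖ ≤ β (∫ μ_h φ_h) / ‖μ_h‖`. -/
theorem infsup_from_biorthogonality
    {Ω : Type*} [MeasurableSpace Ω] (ν : Measure Ω)
    (n : ℕ) (hn : 0 < n)
    (φ μ : Fin n → Ω → ℝ) (c : Fin n → ℝ) (h : Fin n → ℝ)
    (C C₂ C₃ : ℝ) (hC : 0 < C) (hC₂ : 0 < C₂) (hC₃ : 0 < C₃)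
    (hh : ∀ i, 0 < h i)
    (hφ : ∀ i, MemLp (φ i) 2 ν) (hμ : ∀ i, MemLp (μ i) 2 ν)
    (hbi : ∀ i j : Fin n,
      ∫ x, μ i x * φ j x ∂ν = if i = j then c j else 0)
    (hc : ∀ i, C * h i ^ 2 ≤ c i)
    (hφnorm : ∀ a : Fin n → ℝ,
      ((eLpNorm (fun x => ∑ k, a k * φ k x) 2 ν).toReal) ^ 2 ≤
        C₂ * ∑ k, (a k) ^ 2 * (h k) ^ 2)
    (hμnorm : ∀ a : Fin n → ℝ,
      ((eLpNorm (fun x => ∑ k, a k * μ k x) 2 ν).toReal) ^ 2 ≤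
        C₃ * ∑ k, (a k) ^ 2 * (h k) ^ 2) :
    ∀ a : Fin n → ℝ, a ≠ 0 →
      eLpNorm (fun x => ∑ k, a k * μ k x) 2 ν ≠ 0 ∧
      (eLpNorm (fun x => ∑ k, a k * φ k x) 2 ν).toReal ≤
        (Real.sqrt (C₂ * C₃) / C) *
          (∫ x, (∑ k, a k * μ k x) * (∑ k, a k * φ k x) ∂ν) /
            (eLpNorm (fun x => ∑ k, a k * μ k x) 2 ν).toReal :=
  infsup_from_biorthogonality_general ν n φ μ c h C C₂ C₃ hC hh hφ hμ hbi hc hφnorm hμnorm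
end

section
/- Let H be a real inner product space, and let S and M be finite-dimensional subspaces of H with dim S = dim M = n. Suppose there is a constant β > 0 such that for every s ∈ S, ‖s‖ ≤ β · sup_{μ ∈ M, μ ≠ 0} ⟨s, μ⟩ / ‖μ‖. Then for every v ∈ H there exists a unique element Q v ∈ S such that ⟨v − Q v, μ⟩ = 0 for all μ ∈ M; moreover the map v ↦ Q v is linear, satisfies Q s = s for all s ∈ S (so Q is a projection onto S), and is stable: ‖Q v‖ ≤ β · ‖v‖ for all v ∈ H. -/
/-!
Pairing against `M` gives a linear map from `S` to the dual space `M*`. The inf-sup condition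
makes it injective, and `dim S = dim M = dim M*` makes it an isomorphism, so `Q v` is the unique
element of `S` inducing the same functional on `M` as `v`. Stability is the inf-sup condition
applied to `Q v`, whose pairings with `M` are those of `v` and hence bounded by `‖v‖ ‖μ‖`.
-/

open RealInnerProductSpace Module

section

variable {H : Type*} [NormedAddCommGroup H] [InnerProductSpace ℝ H]

def InfSupCondition (S M : Submodule ℝ H) (β : ℝ) : Prop :=
  ∀ s ∈ S, ‖s‖ ≤ β * ⨆ μ : {μ : H // μ ∈ M ∧ μ ≠ 0}, ⟪s, (μ : H)⟫ / ‖(μ : H)‖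

noncomputable def innerPairing (M : Submodule ℝ H) : H →ₗ[ℝ] Dual ℝ M :=
  (innerₗ H).compl₂ M.subtype

@[simp]
theorem innerPairing_apply (M : Submodule ℝ H) (v : H) (μ : M) :
    innerPairing M v μ = ⟪v, (μ : H)⟫ :=
  rfl

namespace InfSupCondition

variable {S M : Submodule ℝ H} {β : ℝ}

theorem norm_le_mul (h : InfSupCondition S M β) (hβ : 0 ≤ β) {s : H} (hs : s ∈ S) {c : ℝ}
    (hc : 0 ≤ c) (hsc : ∀ μ ∈ M, ⟪s, μ⟫ ≤ c * ‖μ‖) : ‖s‖ ≤ β * c := by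
  refine (h s hs).trans (mul_le_mul_of_nonneg_left (Real.iSup_le (fun μ => ?_) hc) hβ)
  rw [div_le_iff₀ (norm_pos_iff.mpr μ.2.2)]
  exact hsc μ μ.2.1

theorem eq_zero_of_inner_eq_zero (h : InfSupCondition S M β) {s : H} (hs : s ∈ S)
    (hs0 : ∀ μ ∈ M, ⟪s, μ⟫ = 0) : s = 0 := by
  have hsup : (⨆ μ : {μ : H // μ ∈ M ∧ μ ≠ 0}, ⟪s, (μ : H)⟫ / ‖(μ : H)‖) = 0 := by
    simp only [fun μ : {μ : H // μ ∈ M ∧ μ ≠ 0} => hs0 μ μ.2.1, zero_div, Real.iSup_const_zero]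
  simpa [hsup] using h s hs

theorem injective_innerPairing_domRestrict (h : InfSupCondition S M β) :
    Function.Injective ((innerPairing M).domRestrict S) := by
  refine (injective_iff_map_eq_zero _).mpr fun s hs => Subtype.ext ?_
  refine h.eq_zero_of_inner_eq_zero s.2 fun μ hμ => ?_
  simpa using LinearMap.congr_fun hs ⟨μ, hμ⟩

variable [FiniteDimensional ℝ S] [FiniteDimensional ℝ M]

noncomputable def pairingEquiv (h : InfSupCondition S M β) (hdim : finrank ℝ S = finrank ℝ M) :
    S ≃ₗ[ℝ] Dual ℝ M :=
  ((innerPairing M).domRestrict S).linearEquivOfInjective h.injective_innerPairing_domRestrict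
    (by rw [Subspace.dual_finrank_eq, hdim])

noncomputable def projection (h : InfSupCondition S M β) (hdim : finrank ℝ S = finrank ℝ M) :
    H →ₗ[ℝ] H :=
  S.subtype ∘ₗ (h.pairingEquiv hdim).symm.toLinearMap ∘ₗ innerPairing M

variable (h : InfSupCondition S M β) (hdim : finrank ℝ S = finrank ℝ M)

theorem projection_mem (v : H) : h.projection hdim v ∈ S :=
  ((h.pairingEquiv hdim).symm _).2

theorem inner_projection {μ : H} (hμ : μ ∈ M) (v : H) : ⟪h.projection hdim v, μ⟫ = ⟪v, μ⟫ :=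
  LinearMap.congr_fun ((h.pairingEquiv hdim).apply_symm_apply (innerPairing M v)) ⟨μ, hμ⟩

theorem inner_sub_projection {μ : H} (hμ : μ ∈ M) (v : H) : ⟪v - h.projection hdim v, μ⟫ = 0 := by
  rw [inner_sub_left, h.inner_projection hdim hμ, sub_self]

theorem eq_projection_of_inner_sub_eq_zero {v w : H} (hw : w ∈ S)
    (hvw : ∀ μ ∈ M, ⟪v - w, μ⟫ = 0) : w = h.projection hdim v := by
  rw [← sub_eq_zero]
  refine h.eq_zero_of_inner_eq_zero (S.sub_mem hw (h.projection_mem hdim v)) fun μ hμ => ?_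
  rw [inner_sub_left, h.inner_projection hdim hμ, ← neg_sub, ← inner_sub_left, hvw μ hμ, neg_zero]

theorem projection_apply_of_mem {s : H} (hs : s ∈ S) : h.projection hdim s = s :=
  (h.eq_projection_of_inner_sub_eq_zero hdim hs fun μ _ => by rw [sub_self, inner_zero_left]).symm

theorem norm_projection_le (hβ : 0 ≤ β) (v : H) : ‖h.projection hdim v‖ ≤ β * ‖v‖ :=
  h.norm_le_mul hβ (h.projection_mem hdim v) (norm_nonneg v) fun μ hμ => by
    rw [h.inner_projection hdim hμ]
    exact real_inner_le_norm v μ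

end InfSupCondition

end

/-- Stability of the projector defined by the multiplier space: if `S` and `M`
are `n`-dimensional subspaces of a real inner product space `H` satisfying the
inf-sup condition `‖s‖ ≤ β ⨆_{0 ≠ μ ∈ M} ⟪s, μ⟫/‖μ‖` for all `s ∈ S`, then
there is a (unique-valued) linear projection `Q` onto `S` characterized by
`⟪v - Q v, μ⟫ = 0` for all `μ ∈ M`, and it is stable: `‖Q v‖ ≤ β ‖v‖`. -/
theorem projection_well_defined_and_stable
    {H : Type*} [NormedAddCommGroup H] [InnerProductSpace ℝ H]
    (S M : Submodule ℝ H) (n : ℕ)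
    [FiniteDimensional ℝ S] [FiniteDimensional ℝ M]
    (hS : Module.finrank ℝ S = n) (hM : Module.finrank ℝ M = n)
    (β : ℝ) (hβ : 0 < β)
    (hinfsup : ∀ s ∈ S,
      ‖s‖ ≤ β * ⨆ μ : {μ : H // μ ∈ M ∧ μ ≠ 0}, ⟪s, (μ : H)⟫ / ‖(μ : H)‖) :
    ∃ Q : H →ₗ[ℝ] H,
      (∀ v : H, Q v ∈ S) ∧
      (∀ v : H, ∀ μ ∈ M, ⟪v - Q v, μ⟫ = 0) ∧
      (∀ v : H, ∀ w ∈ S, (∀ μ ∈ M, ⟪v - w, μ⟫ = 0) → w = Q v) ∧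
      (∀ s ∈ S, Q s = s) ∧
      (∀ v : H, ‖Q v‖ ≤ β * ‖v‖) := by
  have h : InfSupCondition S M β := hinfsup
  have hdim : finrank ℝ S = finrank ℝ M := hS.trans hM.symm
  exact ⟨h.projection hdim, h.projection_mem hdim, fun v _ hμ => h.inner_sub_projection hdim hμ v,
    fun _ _ hw hvw => h.eq_projection_of_inner_sub_eq_zero hdim hw hvw,
    fun _ hs => h.projection_apply_of_mem hdim hs, h.norm_projection_le hdim hβ.le⟩
end
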